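/- Let A be a commutative ring, finite-dimensional as an algebra over a field K of characteristic zero, and suppose A ≅ E₁ × ⋯ × E_r is a product of finite field extensions of K. An element x = (x₁, ..., x_r) ∈ A generates A as a K-algebra if and only if each x_i generates E_i over K and the minimal polynomials of x₁, ..., x_r over K are pairwise coprime (equivalently, pairwise distinct, since they are irreducible). -/

import Mathlib

/-!
Evaluation at `x` is a `K`-algebra map `K[X] → ∏ E i` whose components are evaluation at
the `x i`, with kernels `(minpoly K (x i))`. A map into a finite product is surjective iff
every component is surjective and the component kernels are pairwise comaximal: necessity
because a preimage `a` of `Pi.single j 1` gives `1 = (1 - a) + a ∈ ker fᵢ + ker fⱼ`,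
sufficiency by the Chinese remainder theorem.
-/

namespace AlgHom

variable {R A ι : Type*} {B : ι → Type*} [CommSemiring R] [CommRing A] [Algebra R A]
  [∀ i, Ring (B i)] [∀ i, Algebra R (B i)] (f : ∀ i, A →ₐ[R] B i)

theorem surjective_of_surjective_pi (hf : Function.Surjective (pi f)) (i : ι) :
    Function.Surjective (f i) :=
  (Function.surjective_eval i).comp hf

theorem isCoprime_ker_of_surjective_pi [DecidableEq ι]
    (hf : Function.Surjective (pi f)) :
    Pairwise fun i j => IsCoprime (RingHom.ker (f i)) (RingHom.ker (f j)) := by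
  intro i j hij
  obtain ⟨a, ha⟩ := hf (Pi.single j 1)
  have hai : f i a = 0 := by simpa [hij] using congrFun ha i
  have haj : f j a = 1 := by simpa using congrFun ha j
  refine Ideal.isCoprime_iff_exists.mpr ⟨a, ?_, 1 - a, ?_, add_sub_cancel a 1⟩
  · exact RingHom.mem_ker.mpr hai
  · rw [RingHom.mem_ker, map_sub, map_one, haj, sub_self]

variable [_root_.Finite ι]

theorem surjective_pi_of_isCoprime_ker (hf : ∀ i, Function.Surjective (f i))
    (hker : Pairwise fun i j => IsCoprime (RingHom.ker (f i)) (RingHom.ker (f j))) :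
    Function.Surjective (pi f) := by
  intro z
  choose y hy using fun i => hf i (z i)
  obtain ⟨a, ha⟩ := Ideal.pi_quotient_surjective hker fun i => Ideal.Quotient.mk _ (y i)
  refine ⟨a, funext fun i => ?_⟩
  have hdiff : a - y i ∈ RingHom.ker (f i) := Ideal.Quotient.eq.mp (ha i)
  rw [RingHom.mem_ker, map_sub, sub_eq_zero] at hdiff
  rw [pi_apply, hdiff, hy]

theorem surjective_pi_iff :
    Function.Surjective (pi f) ↔
      (∀ i, Function.Surjective (f i)) ∧
        Pairwise fun i j => IsCoprime (RingHom.ker (f i)) (RingHom.ker (f j)) := by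
  classical
  exact ⟨fun hf => ⟨surjective_of_surjective_pi f hf, isCoprime_ker_of_surjective_pi f hf⟩,
    fun ⟨hf, hker⟩ => surjective_pi_of_isCoprime_ker f hf hker⟩

end AlgHom

open Polynomial

theorem Algebra.adjoin_singleton_eq_top_iff_surjective_aeval {R A : Type*} [CommSemiring R]
    [Semiring A] [Algebra R A] (x : A) :
    Algebra.adjoin R {x} = ⊤ ↔ Function.Surjective (aeval (R := R) x) := by
  rw [Algebra.adjoin_singleton_eq_range_aeval, AlgHom.range_eq_top]

theorem minpoly.isCoprime_ker_aeval_iff {K A B : Type*} [Field K] [Ring A] [Ring B]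
    [Algebra K A] [Algebra K B] (x : A) (y : B) :
    IsCoprime (RingHom.ker (Polynomial.aeval (R := K) x))
        (RingHom.ker (Polynomial.aeval (R := K) y)) ↔
      IsCoprime (minpoly K x) (minpoly K y) := by
  rw [minpoly.ker_aeval_eq_span_minpoly, minpoly.ker_aeval_eq_span_minpoly]
  exact Ideal.isCoprime_span_singleton_iff _ _

theorem generates_prod_iff_components_generate_and_minpoly_coprime_general
    (K : Type) [Field K]
    (r : ℕ) (E : Fin r → Type)
    [∀ i, Field (E i)] [∀ i, Algebra K (E i)]
    (x : (i : Fin r) → E i) :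
    Algebra.adjoin K {x} = ⊤ ↔
      (∀ i, Algebra.adjoin K {x i} = ⊤) ∧
        Pairwise fun i j => IsCoprime (minpoly K (x i)) (minpoly K (x j)) := by
  simp only [Algebra.adjoin_singleton_eq_top_iff_surjective_aeval, aeval_pi,
    AlgHom.surjective_pi_iff, minpoly.isCoprime_ker_aeval_iff]

/-- An element `x = (x₁, …, x_r)` of a finite product of finite field extensions of a
characteristic-zero field `K` generates the product as a `K`-algebra if and only if each
`x_i` generates `E_i` over `K` and the minimal polynomials of the `x_i` are pairwise
coprime. -/
theorem generates_prod_iff_components_generate_and_minpoly_coprime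
    (K : Type) [Field K] [CharZero K]
    (r : ℕ) (E : Fin r → Type)
    [∀ i, Field (E i)] [∀ i, Algebra K (E i)] [∀ i, FiniteDimensional K (E i)]
    (x : (i : Fin r) → E i) :
    Algebra.adjoin K {x} = ⊤ ↔
      (∀ i, Algebra.adjoin K {x i} = ⊤) ∧
        Pairwise fun i j => IsCoprime (minpoly K (x i)) (minpoly K (x j)) :=
  generates_prod_iff_components_generate_and_minpoly_coprime_general K r E x
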